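/- arXiv:2407.16797 — 3 statements merged into one kernel-verified Lean document; each statement's English description precedes it below -/
import Mathlib

section
/- For any integer n ≥ 0 and all y ∈ R, the normalized Hermite polynomial satisfies |H_n(y)| ≤ π^{-1/4} exp(√(2n)·|y|). -/
open Polynomial Finset
open scoped Nat


lemma fact_ratio (a k : ℕ) : (a + k)! ≤ a ! * (a + k) ^ k := by
  induction k with
  | zero => simp
  | succ k ih =>
    calc (a + (k+1))! = (a + k + 1) * (a + k)! := by rw [← Nat.add_assoc]; exact Nat.factorial_succ _
    _ ≤ (a + k + 1) * (a ! * (a + k) ^ k) := Nat.mul_le_mul_left _ ih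
    _ ≤ (a + k + 1) * (a ! * (a + k + 1) ^ k) := by
        exact Nat.mul_le_mul_left _ (Nat.mul_le_mul_left _ (Nat.pow_le_pow_left (Nat.le_succ _) k))
    _ = a ! * (a + (k+1)) ^ (k+1) := by ring

lemma two_mul_fact (j : ℕ) : (2 * j)! = (2*j-1)‼ * (2 ^ j * j !) := by
  cases j with
  | zero => simp
  | succ j =>
    have h : 2 * (j+1) = (2*j+1) + 1 := by ring
    rw [h, Nat.factorial_eq_mul_doubleFactorial]
    have h2 : (2*j+1) + 1 = 2 * (j+1) := by ring
    rw [h2, Nat.doubleFactorial_two_mul]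
    have : 2 * (j+1) - 1 = 2*j+1 := by omega
    rw [this]; ring

lemma central_le (j : ℕ) : (2*j)! ≤ 4 ^ j * (j ! * j !) := by
  have h1 : (2*j).choose j * j ! * (2*j - j)! = (2*j)! :=
    Nat.choose_mul_factorial_mul_factorial (by omega)
  have h2 : (2*j).choose j ≤ 4 ^ j := by
    calc (2*j).choose j ≤ (2*j+1).choose j := Nat.choose_le_choose j (Nat.le_succ _)
    _ ≤ 4 ^ j := Nat.choose_middle_le_pow j
  have h3 : 2*j - j = j := by omega
  rw [h3] at h1
  calc (2*j)! = (2*j).choose j * j ! * j ! := h1.symm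
  _ ≤ 4 ^ j * j ! * j ! := by exact Nat.mul_le_mul_right _ (Nat.mul_le_mul_right _ h2)
  _ = 4 ^ j * (j ! * j !) := by ring

lemma key_nat (j k : ℕ) :
    ((2*j-1)‼ * (2*j+k).choose k * k !) ^ 2 ≤ (2*j+k)! * (2*j+k) ^ k := by
  set n := 2*j+k with hn
  have h2 : n.choose k * k ! * (2*j)! = n ! := by
    have := Nat.choose_mul_factorial_mul_factorial (show k ≤ n by omega)
    rwa [show n - k = 2*j by omega] at this
  have hid : ((2*j-1)‼ * n.choose k * k !) * (2 ^ j * j !) = n ! := by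
    rw [← h2, two_mul_fact]; ring
  have h4 : n ! ≤ (2*j)! * n ^ k := by
    have := fact_ratio (2*j) k; rwa [← hn] at this
  have h5 : n ! ≤ 4 ^ j * (j ! * j !) * n ^ k :=
    h4.trans (Nat.mul_le_mul_right _ (central_le j))
  have hpos : 0 < (2 ^ j * j !) ^ 2 := by positivity
  refine Nat.le_of_mul_le_mul_right ?_ hpos
  calc ((2*j-1)‼ * n.choose k * k !) ^ 2 * (2 ^ j * j !) ^ 2
      = (((2*j-1)‼ * n.choose k * k !) * (2 ^ j * j !)) ^ 2 := by ring
    _ = n ! * n ! := by rw [hid]; ring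
    _ ≤ n ! * (4 ^ j * (j ! * j !) * n ^ k) := Nat.mul_le_mul_left _ h5
    _ = n ! * n ^ k * (2 ^ j * j !) ^ 2 := by
        rw [show (4:ℕ) = 2^2 from rfl, ← pow_mul, Nat.mul_comm 2 j, pow_mul]; ring


lemma iter_gauss (n : ℕ) (y : ℝ) :
    iteratedDeriv n (fun t : ℝ => Real.exp (-t ^ 2)) y
      = Real.sqrt 2 ^ n *
        ((-1 : ℝ) ^ n * aeval (Real.sqrt 2 * y) (hermite n) * Real.exp (-y ^ 2)) := by
  have hsq : (Real.sqrt 2) ^ 2 = 2 := Real.sq_sqrt (by norm_num)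
  have hfun : (fun t : ℝ => Real.exp (-t ^ 2))
      = fun t => (fun x : ℝ => Real.exp (-(x ^ 2 / 2))) (Real.sqrt 2 * t) := by
    funext t
    simp only [mul_pow, hsq]
    ring_nf
  have hcd : ContDiff ℝ n (fun x : ℝ => Real.exp (-(x ^ 2 / 2))) := by
    apply Real.contDiff_exp.comp
    exact ((contDiff_id.pow 2).div_const 2).neg
  rw [hfun, iteratedDeriv_comp_const_mul hcd]
  have := Polynomial.deriv_gaussian_eq_hermite_mul_gaussian n (Real.sqrt 2 * y)
  simp only [iteratedDeriv_eq_iterate]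
  rw [this]
  have harg : -( (Real.sqrt 2 * y) ^ 2 / 2) = -y ^ 2 := by
    rw [mul_pow, hsq]; ring
  rw [harg]

lemma term_bound (n k : ℕ) (hk : k ≤ n) (y : ℝ) :
    Real.sqrt 2 ^ n * |((hermite n).coeff k : ℝ)| * (Real.sqrt 2 * |y|) ^ k
      ≤ Real.sqrt ((2:ℝ) ^ n * n !) * ((Real.sqrt (2 * n) * |y|) ^ k / k !) := by
  by_cases hpar : Even (n + k)
  · obtain ⟨j, hj⟩ : ∃ j, n = 2 * j + k := by
      rcases hpar with ⟨m, hm⟩; exact ⟨m - k, by omega⟩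
    have hcoeff : |((hermite n).coeff k : ℝ)| = ((2*j-1)‼ * n.choose k : ℕ) := by
      rw [coeff_hermite_of_even_add hpar]
      push_cast
      rw [abs_mul, abs_mul, abs_pow, abs_neg, abs_one, one_pow, one_mul,
        Nat.abs_cast, Nat.abs_cast, show n - k - 1 = 2*j-1 by omega]
    rw [hcoeff]
    rw [mul_pow (Real.sqrt 2) |y| k, mul_pow (Real.sqrt (2*n)) |y| k]
    rw [show Real.sqrt 2 ^ n * ((2*j-1)‼ * n.choose k : ℕ) * (Real.sqrt 2 ^ k * |y| ^ k)
        = (Real.sqrt 2 ^ n * Real.sqrt 2 ^ k * ((2*j-1)‼ * n.choose k : ℕ)) * |y| ^ k by ring,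
      show Real.sqrt ((2:ℝ)^n * n !) * (Real.sqrt (2*n) ^ k * |y| ^ k / k !)
        = (Real.sqrt ((2:ℝ)^n * n !) * Real.sqrt (2*n) ^ k / k !) * |y| ^ k by ring]
    apply mul_le_mul_of_nonneg_right _ (pow_nonneg (abs_nonneg y) k)
    have hexp : Real.sqrt 2 ^ n * Real.sqrt 2 ^ k = 2 ^ (j+k) := by
      rw [← pow_add, hj, show 2*j+k+k = 2*(j+k) by ring, pow_mul,
        Real.sq_sqrt (by norm_num : (0:ℝ) ≤ 2)]
    rw [hexp, le_div_iff₀ (by positivity : (0:ℝ) < (k ! : ℝ))]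
    apply le_of_pow_le_pow_left₀ (by norm_num : (2:ℕ) ≠ 0) (by positivity)
    have h1 : (Real.sqrt ((2:ℝ)^n * n !))^2 = (2:ℝ)^n * n ! := Real.sq_sqrt (by positivity)
    have h2 : (Real.sqrt (2*(n:ℝ)))^2 = 2*(n:ℝ) := Real.sq_sqrt (by positivity)
    have hNk : (((2*j-1)‼ * n.choose k * k !)^2 : ℝ) ≤ ((n ! * n ^ k : ℕ) : ℝ) := by
      have := key_nat j k
      rw [← hj] at this
      exact_mod_cast this
    calc ((2:ℝ)^(j+k) * ((2*j-1)‼ * n.choose k : ℕ) * k !)^2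
        = ((2:ℝ)^(j+k))^2 * (((2*j-1)‼ * n.choose k * k !)^2 : ℝ) := by push_cast; ring
      _ ≤ ((2:ℝ)^(j+k))^2 * ((n ! * n ^ k : ℕ) : ℝ) := by
          exact mul_le_mul_of_nonneg_left hNk (by positivity)
      _ = (Real.sqrt ((2:ℝ)^n * n !) * Real.sqrt (2*(n:ℝ)) ^ k)^2 := by
          rw [mul_pow, h1,
            show (Real.sqrt (2*(n:ℝ)) ^ k)^2 = ((2:ℝ)*(n:ℝ))^k by
              rw [← pow_mul, mul_comm k 2, pow_mul, h2],
            mul_pow]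
          push_cast [hj]
          ring
  · rw [coeff_hermite_of_odd_add (Nat.not_even_iff_odd.1 hpar)]
    simp only [Int.cast_zero, abs_zero, mul_zero, zero_mul]
    positivity

/-- The `L²`-normalized Hermite polynomial
`H_n(y) = (-1)^n (2^n n! √π)^{-1/2} e^{y²} (d/dy)^n e^{-y²}`. -/
noncomputable def normHermite (n : ℕ) (y : ℝ) : ℝ :=
  (-1 : ℝ) ^ n * ((2 : ℝ) ^ n * (n.factorial : ℝ) * Real.sqrt Real.pi) ^ (-(1 / 2 : ℝ)) *
    Real.exp (y ^ 2) * iteratedDeriv n (fun t : ℝ => Real.exp (-t ^ 2)) y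

/-- for every `n ≥ 0` and every real `y`,
`|H_n(y)| ≤ π^{-1/4} exp(√(2n) |y|)`. -/
theorem abs_normHermite_le (n : ℕ) (y : ℝ) :
    |normHermite n y| ≤ Real.pi ^ (-(1 / 4 : ℝ)) * Real.exp (Real.sqrt (2 * n) * |y|) := by
  set c : ℝ := ((2 : ℝ) ^ n * (n ! : ℝ) * Real.sqrt Real.pi) ^ (-(1 / 2 : ℝ)) with hc
  have hcpos : 0 ≤ c := Real.rpow_nonneg (by positivity) _
  have hrepr : normHermite n y
      = c * (Real.sqrt 2 ^ n * aeval (Real.sqrt 2 * y) (hermite n)) := by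
    have h1 : ((-1:ℝ))^n * (-1:ℝ)^n = 1 := by
      rw [← mul_pow]; norm_num
    have h2 : Real.exp (y^2) * Real.exp (-y^2) = 1 := by
      rw [← Real.exp_add]; simp
    unfold normHermite
    rw [iter_gauss]
    calc (-1:ℝ)^n * c * Real.exp (y^2)
          * (Real.sqrt 2 ^ n * ((-1)^n * aeval (Real.sqrt 2 * y) (hermite n)
              * Real.exp (-y^2)))
        = ((-1:ℝ)^n * (-1)^n) * (Real.exp (y^2) * Real.exp (-y^2))
            * (c * (Real.sqrt 2 ^ n * aeval (Real.sqrt 2 * y) (hermite n))) := by ring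
      _ = c * (Real.sqrt 2 ^ n * aeval (Real.sqrt 2 * y) (hermite n)) := by
          rw [h1, h2]; ring
  have heval : aeval (Real.sqrt 2 * y) (hermite n)
      = ∑ k ∈ range (n+1), ((hermite n).coeff k : ℝ) * (Real.sqrt 2 * y) ^ k := by
    rw [Polynomial.aeval_eq_sum_range'
      (show (hermite n).natDegree < n + 1 by rw [natDegree_hermite]; omega)]
    simp only [zsmul_eq_mul]
  have habs : |aeval (Real.sqrt 2 * y) (hermite n)|
      ≤ ∑ k ∈ range (n+1), |((hermite n).coeff k : ℝ)| * (Real.sqrt 2 * |y|) ^ k := by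
    rw [heval]
    refine (Finset.abs_sum_le_sum_abs _ _).trans (le_of_eq ?_)
    refine Finset.sum_congr rfl fun k _ => ?_
    rw [abs_mul, abs_pow, abs_mul, abs_of_nonneg (Real.sqrt_nonneg 2)]
  have hsum : Real.sqrt 2 ^ n
        * ∑ k ∈ range (n+1), |((hermite n).coeff k : ℝ)| * (Real.sqrt 2 * |y|) ^ k
      ≤ Real.sqrt ((2:ℝ) ^ n * n !) * Real.exp (Real.sqrt (2 * n) * |y|) := by
    rw [Finset.mul_sum]
    calc ∑ k ∈ range (n+1),
          Real.sqrt 2 ^ n * (|((hermite n).coeff k : ℝ)| * (Real.sqrt 2 * |y|) ^ k)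
        ≤ ∑ k ∈ range (n+1),
            Real.sqrt ((2:ℝ) ^ n * n !) * ((Real.sqrt (2 * n) * |y|) ^ k / k !) := by
          refine Finset.sum_le_sum fun k hk => ?_
          have := term_bound n k (by simpa using Nat.lt_succ_iff.mp (Finset.mem_range.mp hk)) y
          linarith [this]
      _ = Real.sqrt ((2:ℝ) ^ n * n !)
            * ∑ k ∈ range (n+1), (Real.sqrt (2 * n) * |y|) ^ k / k ! := by
          rw [Finset.mul_sum]
      _ ≤ Real.sqrt ((2:ℝ) ^ n * n !) * Real.exp (Real.sqrt (2 * n) * |y|) := by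
          refine mul_le_mul_of_nonneg_left ?_ (Real.sqrt_nonneg _)
          exact Real.sum_le_exp_of_nonneg (by positivity) (n+1)
  have hconst : c * Real.sqrt ((2:ℝ) ^ n * n !) = Real.pi ^ (-(1 / 4 : ℝ)) := by
    have hA : (0:ℝ) < (2:ℝ) ^ n * n ! := by positivity
    rw [hc, Real.mul_rpow hA.le (Real.sqrt_nonneg _), Real.sqrt_eq_rpow ((2:ℝ)^n * n !),
      mul_assoc, mul_comm (Real.sqrt Real.pi ^ (-(1/2:ℝ))), ← mul_assoc,
      ← Real.rpow_add hA, neg_add_cancel, Real.rpow_zero, one_mul,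
      Real.sqrt_eq_rpow, ← Real.rpow_mul Real.pi_pos.le]
    norm_num
  calc |normHermite n y|
      = c * (Real.sqrt 2 ^ n * |aeval (Real.sqrt 2 * y) (hermite n)|) := by
        rw [hrepr, abs_mul, abs_of_nonneg hcpos, abs_mul, abs_pow,
          abs_of_nonneg (Real.sqrt_nonneg 2)]
    _ ≤ c * (Real.sqrt ((2:ℝ) ^ n * n !) * Real.exp (Real.sqrt (2 * n) * |y|)) := by
        refine mul_le_mul_of_nonneg_left ?_ hcpos
        calc Real.sqrt 2 ^ n * |aeval (Real.sqrt 2 * y) (hermite n)|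
            ≤ Real.sqrt 2 ^ n
              * ∑ k ∈ range (n+1), |((hermite n).coeff k : ℝ)| * (Real.sqrt 2 * |y|) ^ k :=
              mul_le_mul_of_nonneg_left habs (by positivity)
          _ ≤ _ := hsum
    _ = Real.pi ^ (-(1 / 4 : ℝ)) * Real.exp (Real.sqrt (2 * n) * |y|) := by
        rw [← mul_assoc, hconst]
end

section
/- Let Σ and Σ' be two symmetric positive semidefinite n×n real matrices with eigenvalues λ_1 ≤ ... ≤ λ_n and λ'_1 ≤ ... ≤ λ'_n respectively (both listed in increasing order). Then Σ_{i=1}^n (λ_i - λ'_i)² ≤ ‖Σ - Σ'‖_F², where ‖·‖_F denotes the Frobenius norm. -/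
/-!
Write `A = U diag(μ) Uᵀ` and `B = V diag(ν) Vᵀ` with `U`, `V` orthogonal. Then
`‖A - B‖² = ∑ μᵢ² + ∑ νᵢ² - 2 tr(AB)` and `tr(AB) = ∑ᵢⱼ Sᵢⱼ μᵢ νⱼ`, where `Sᵢⱼ = (UᵀV)ᵢⱼ²` is
doubly stochastic. By Birkhoff's theorem `S` is a convex combination of permutation matrices,
and for each of them the rearrangement inequality bounds the sum by `∑ μᵢ νᵢ` since `μ` and `ν`
are both increasing.
-/

open Finset Polynomial Matrix

theorem exists_perm_comp_eq_of_univ_map_eq {α : Type*} [LinearOrder α] {n : ℕ}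
    {f g : Fin n → α} (h : univ.val.map f = univ.val.map g) :
    ∃ σ : Equiv.Perm (Fin n), g ∘ σ = f := by
  have hperm : (List.ofFn (f ∘ Tuple.sort f)).Perm (List.ofFn (g ∘ Tuple.sort g)) := by
    rw [Fin.univ_val_map, Fin.univ_val_map, Multiset.coe_eq_coe] at h
    exact ((Tuple.sort f).ofFn_comp_perm f).trans (h.trans ((Tuple.sort g).ofFn_comp_perm g).symm)
  have hsort : f ∘ Tuple.sort f = g ∘ Tuple.sort g := List.ofFn_injective <|
    hperm.eq_of_sortedLE (Tuple.monotone_sort f).sortedLE_ofFn (Tuple.monotone_sort g).sortedLE_ofFn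
  refine ⟨Tuple.sort g * (Tuple.sort f)⁻¹, funext fun i => ?_⟩
  simpa using congrFun hsort.symm ((Tuple.sort f)⁻¹ i)

theorem dotProduct_mulVec_le_of_mem_doublyStochastic {ι : Type*} [Fintype ι] [DecidableEq ι]
    {μ ν : ι → ℝ} (hμν : Monovary μ ν) {S : Matrix ι ι ℝ} (hS : S ∈ doublyStochastic ℝ ι) :
    μ ⬝ᵥ (S *ᵥ ν) ≤ μ ⬝ᵥ ν := by
  obtain ⟨w, hw_nonneg, hw_sum, rfl⟩ := exists_eq_sum_perm_of_mem_doublyStochastic hS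
  have hperm (σ : Equiv.Perm ι) : μ ⬝ᵥ (σ.permMatrix ℝ *ᵥ ν) ≤ μ ⬝ᵥ ν := by
    simpa [permMatrix_mulVec, dotProduct] using hμν.sum_mul_comp_perm_le_sum_mul (σ := σ)
  calc μ ⬝ᵥ ((∑ σ, w σ • σ.permMatrix ℝ) *ᵥ ν) = ∑ σ, w σ * μ ⬝ᵥ (σ.permMatrix ℝ *ᵥ ν) := by
        simp [sum_mulVec, dotProduct_sum, smul_mulVec, dotProduct_smul]
    _ ≤ ∑ σ, w σ * μ ⬝ᵥ ν := by gcongr with σ; exacts [hw_nonneg σ, hperm σ]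
    _ = μ ⬝ᵥ ν := by rw [← sum_mul, hw_sum, one_mul]

namespace Matrix

variable {ι : Type*} [Fintype ι]

theorem IsHermitian.sum_sq_eq_trace_mul_self {M : Matrix ι ι ℝ} (hM : M.IsHermitian) :
    ∑ i, ∑ j, M i j ^ 2 = (M * M).trace := by
  simp only [Matrix.trace, Matrix.diag, mul_apply, sq]
  refine sum_congr rfl fun i _ => sum_congr rfl fun j _ => ?_
  rw [← hM.apply j i]
  simp

variable [DecidableEq ι]

theorem map_sq_mem_doublyStochastic {W : Matrix ι ι ℝ} (hW : W ∈ unitaryGroup ι ℝ) :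
    W.map (· ^ 2) ∈ doublyStochastic ℝ ι := by
  refine mem_doublyStochastic_iff_sum.2 ⟨fun i j => sq_nonneg _, fun i => ?_, fun j => ?_⟩
  · simpa [mul_apply, sq] using congrFun₂ (mem_unitaryGroup_iff.1 hW) i i
  · simpa [mul_apply, sq] using congrFun₂ (mem_unitaryGroup_iff'.1 hW) j j

theorem trace_diagonal_mul_mul_diagonal_mul_star (a b : ι → ℝ) (W : Matrix ι ι ℝ) :
    (diagonal a * W * diagonal b * star W).trace = a ⬝ᵥ (W.map (· ^ 2) *ᵥ b) := by
  simp only [Matrix.trace, Matrix.diag, mul_apply (M := diagonal a * W * diagonal b), mul_diagonal,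
    diagonal_mul, star_apply, star_trivial, dotProduct, mulVec, map_apply, mul_sum]
  exact sum_congr rfl fun i _ => sum_congr rfl fun j _ => by ring

theorem trace_conj_diagonal_mul_conj_diagonal (U V : Matrix ι ι ℝ) (a b : ι → ℝ) :
    (U * diagonal a * star U * (V * diagonal b * star V)).trace =
      a ⬝ᵥ ((star U * V).map (· ^ 2) *ᵥ b) := by
  rw [← trace_diagonal_mul_mul_diagonal_mul_star, star_mul, star_star]
  simp only [Matrix.mul_assoc]
  rw [trace_mul_comm]
  simp only [Matrix.mul_assoc]

theorem trace_conj_diagonal_mul_self {U : Matrix ι ι ℝ} (hU : U ∈ unitaryGroup ι ℝ) (a : ι → ℝ) :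
    (U * diagonal a * star U * (U * diagonal a * star U)).trace = ∑ i, a i ^ 2 := by
  rw [trace_conj_diagonal_mul_conj_diagonal, mem_unitaryGroup_iff'.1 hU,
    Matrix.map_one _ (by simp) (by simp), one_mulVec, dotProduct]
  simp only [sq]

theorem submatrix_id_mem_unitaryGroup {U : Matrix ι ι ℝ} (hU : U ∈ unitaryGroup ι ℝ)
    (σ : Equiv.Perm ι) : U.submatrix id σ ∈ unitaryGroup ι ℝ := by
  rw [mem_unitaryGroup_iff, star_eq_conjTranspose, conjTranspose_submatrix, submatrix_mul_equiv,
    ← star_eq_conjTranspose, mem_unitaryGroup_iff.1 hU]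
  simp

theorem submatrix_id_mul_diagonal_comp_mul_star (U : Matrix ι ι ℝ) (d : ι → ℝ)
    (σ : Equiv.Perm ι) :
    U.submatrix id σ * diagonal (d ∘ σ) * star (U.submatrix id σ) = U * diagonal d * star U := by
  rw [← submatrix_diagonal_equiv, submatrix_mul_equiv, star_eq_conjTranspose,
    conjTranspose_submatrix, submatrix_mul_equiv, ← star_eq_conjTranspose]
  simp

theorem IsHermitian.exists_mem_unitaryGroup_eq_conj_diagonal {n : ℕ}
    {A : Matrix (Fin n) (Fin n) ℝ} (hA : A.IsHermitian) {μ : Fin n → ℝ}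
    (hμ : A.charpoly = ∏ i, (X - C (μ i))) :
    ∃ U ∈ unitaryGroup (Fin n) ℝ, A = U * diagonal μ * star U := by
  have hroots : univ.val.map μ = univ.val.map hA.eigenvalues := by
    have := hA.roots_charpoly_eq_eigenvalues
    rw [hμ, roots_prod _ _ (prod_ne_zero_iff.2 fun i _ => X_sub_C_ne_zero (μ i))] at this
    simpa using this
  obtain ⟨σ, rfl⟩ := exists_perm_comp_eq_of_univ_map_eq hroots
  refine ⟨_, submatrix_id_mem_unitaryGroup hA.eigenvectorUnitary.2 σ, ?_⟩
  rw [submatrix_id_mul_diagonal_comp_mul_star]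
  simpa using hA.spectral_theorem

theorem hoffman_wielandt_of_eq_conj_diagonal {A B U V : Matrix ι ι ℝ}
    (hU : U ∈ unitaryGroup ι ℝ) (hV : V ∈ unitaryGroup ι ℝ) {μ ν : ι → ℝ} (hμν : Monovary μ ν)
    (hA : A = U * diagonal μ * star U) (hB : B = V * diagonal ν * star V) :
    ∑ i, (μ i - ν i) ^ 2 ≤ ∑ i, ∑ j, (A i j - B i j) ^ 2 := by
  have hconj_herm {W : Matrix ι ι ℝ} (d : ι → ℝ) : (W * diagonal d * star W).IsHermitian :=
    isHermitian_mul_mul_conjTranspose W (isHermitian_diagonal d)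
  have hfrob : ∑ i, ∑ j, (A i j - B i j) ^ 2 = ((A - B) * (A - B)).trace := by
    subst hA hB
    exact ((hconj_herm μ).sub (hconj_herm ν)).sum_sq_eq_trace_mul_self
  have hcross : μ ⬝ᵥ ((star U * V).map (· ^ 2) *ᵥ ν) ≤ μ ⬝ᵥ ν :=
    dotProduct_mulVec_le_of_mem_doublyStochastic hμν
      (map_sq_mem_doublyStochastic (mul_mem (Unitary.star_mem hU) hV))
  have hexpand : ∑ i, (μ i - ν i) ^ 2 = ∑ i, μ i ^ 2 + ∑ i, ν i ^ 2 - 2 * μ ⬝ᵥ ν := by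
    simp only [dotProduct, sub_sq, sum_add_distrib, sum_sub_distrib, mul_sum, mul_assoc]
    ring
  rw [hfrob, sub_mul, mul_sub, mul_sub, trace_sub, trace_sub, trace_sub, trace_mul_comm B A, hA, hB,
    trace_conj_diagonal_mul_self hU, trace_conj_diagonal_mul_self hV,
    trace_conj_diagonal_mul_conj_diagonal]
  linarith

end Matrix

/-- Hoffman–Wielandt inequality for symmetric PSD matrices:
if `A` and `B` are real symmetric positive semidefinite `n×n` matrices whose
eigenvalues (with multiplicity), listed in increasing order, are `μ₁ ≤ … ≤ μ_n`
and `ν₁ ≤ … ≤ ν_n`, then `∑ᵢ (μᵢ - νᵢ)² ≤ ‖A - B‖_F²`. -/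
theorem hoffman_wielandt_psd
    (n : ℕ) (A B : Matrix (Fin n) (Fin n) ℝ)
    (hA : A.PosSemidef) (hB : B.PosSemidef)
    (μ ν : Fin n → ℝ) (hμ : Monotone μ) (hν : Monotone ν)
    (hAeig : A.charpoly = ∏ i : Fin n, (X - C (μ i)))
    (hBeig : B.charpoly = ∏ i : Fin n, (X - C (ν i))) :
    ∑ i : Fin n, (μ i - ν i) ^ 2 ≤ ∑ i : Fin n, ∑ j : Fin n, (A i j - B i j) ^ 2 := by
  obtain ⟨U, hU, hAU⟩ := hA.isHermitian.exists_mem_unitaryGroup_eq_conj_diagonal hAeig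
  obtain ⟨V, hV, hBV⟩ := hB.isHermitian.exists_mem_unitaryGroup_eq_conj_diagonal hBeig
  exact hoffman_wielandt_of_eq_conj_diagonal hU hV (hμ.monovary hν) hAU hBV
end

section
/- Let Z = Σ_{j=1}^m w_j log(V_j) where the V_j are independent continuous positive random variables each satisfying P(a ≤ V_j ≤ b) > 0 for all 0 < a < b, and at least one weight w_{j_0} is nonzero. Then the cumulative distribution function of Z is continuous and strictly increasing on R. -/
/-!
The law of `Z` is the convolution of the laws of the independent summands `wⱼ log Vⱼ`.
The summand with `w_{j₀} ≠ 0` has no atoms, since `x ↦ w_{j₀} log x` is injective on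
`(0, ∞)`, and convolving with an atomless law leaves no atoms, so the cdf of `Z` is continuous.
Each `Vⱼ` has all of `(0, ∞)` in its support, so `wⱼ log Vⱼ` has every `wⱼ L` in its support;
the support of a sum of independent variables contains the sums of points of the supports,
and choosing `L` supported at `j₀` reaches every real number. A law of full support charges
every interval, so the cdf of `Z` is strictly increasing.
-/

open MeasureTheory ProbabilityTheory

namespace MeasureTheory

variable {α β : Type*} [MeasurableSpace α] [MeasurableSpace β]

lemma nullSingletonClass_map_of_injOn [MeasurableSingletonClass β] {ν : Measure α}
    [NullSingletonClass ν] {g : α → β} {s : Set α} (hg : Measurable g) (hinj : Set.InjOn g s)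
    (hs : ∀ᵐ x ∂ν, x ∈ s) : NullSingletonClass (ν.map g) := by
  refine ⟨fun y => ?_⟩
  rw [Measure.map_apply hg (measurableSet_singleton y)]
  have hsub : g ⁻¹' {y} ⊆ (g ⁻¹' {y} ∩ s) ∪ sᶜ := fun x hx => by
    by_cases x ∈ s <;> simp_all
  have hfiber : (g ⁻¹' {y} ∩ s).Subsingleton := fun x hx x' hx' =>
    hinj hx.2 hx'.2 (hx.1.trans hx'.1.symm)
  exact measure_mono_null hsub (measure_union_null (hfiber.measure_zero ν) (ae_iff.1 hs))

lemma Measure.mem_support_map [TopologicalSpace α] [TopologicalSpace β] {ν : Measure α}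
    {g : α → β} {x : α} (hg : AEMeasurable g ν) (hgx : ContinuousAt g x) (hx : x ∈ ν.support) :
    g x ∈ (ν.map g).support := by
  rw [Measure.mem_support_iff_forall] at hx ⊢
  exact fun U hU => (hx _ (hgx hU)).trans_le (Measure.le_map_apply hg U)

end MeasureTheory

namespace ProbabilityTheory

lemma continuous_cdf (ν : Measure ℝ) [IsProbabilityMeasure ν] [NullSingletonClass ν] :
    Continuous (cdf ν) := by
  refine continuous_iff_continuousAt.2 fun x => ?_
  rw [(cdf ν).mono.continuousAt_iff_leftLim_eq_rightLim, (cdf ν).rightLim_eq]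
  have h := (cdf ν).measure_singleton x
  rw [measure_cdf, measure_singleton, eq_comm, ENNReal.ofReal_eq_zero, sub_nonpos] at h
  exact le_antisymm ((cdf ν).mono.leftLim_le le_rfl) h

lemma strictMono_cdf (ν : Measure ℝ) [IsProbabilityMeasure ν] (hν : ν.support = Set.univ) :
    StrictMono (cdf ν) := by
  intro a b hab
  have hmid : (a + b) / 2 ∈ ν.support := hν ▸ Set.mem_univ _
  have hpos : 0 < ν (Set.Ioc a b) :=
    ((Measure.mem_support_iff_forall _).1 hmid _
      (Ioo_mem_nhds (by linarith) (by linarith))).trans_le (measure_mono Set.Ioo_subset_Ioc_self)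
  rwa [← measure_cdf ν, (cdf ν).measure_Ioc, ENNReal.ofReal_pos, sub_pos] at hpos

variable {Ω : Type*} [MeasurableSpace Ω] {μ : Measure Ω}

lemma cdf_map_apply [IsProbabilityMeasure μ] {X : Ω → ℝ} (hX : Measurable X) (t : ℝ) :
    cdf (μ.map X) t = μ.real {ω | X ω ≤ t} := by
  have := Measure.isProbabilityMeasure_map (μ := μ) hX.aemeasurable
  rw [cdf_eq_real, map_measureReal_apply hX measurableSet_Iic]
  rfl

section Independent

lemma iIndepFun.sum_mem_support_map_sum {ι E : Type*} [Fintype ι] [SeminormedAddCommGroup E]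
    [MeasurableSpace E] [OpensMeasurableSpace E] [MeasurableAdd₂ E] {f : ι → Ω → E}
    (hf : iIndepFun f μ) (hmeas : ∀ j, Measurable (f j)) {c : ι → E}
    (hc : ∀ j, c j ∈ (μ.map (f j)).support) :
    ∑ j, c j ∈ (μ.map (∑ j, f j)).support := by
  simp only [Metric.nhds_basis_ball.mem_measureSupport] at hc ⊢
  intro ε hε
  set δ := ε / (Fintype.card ι + 1)
  have hδ : 0 < δ := by positivity
  have hsub : ⋂ j, f j ⁻¹' Metric.ball (c j) δ ⊆
      (∑ j, f j) ⁻¹' Metric.ball (∑ j, c j) ε := by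
    intro ω hω
    simp only [Set.mem_iInter, Set.mem_preimage, Metric.mem_ball, dist_eq_norm] at hω ⊢
    calc ‖(∑ j, f j) ω - ∑ j, c j‖ = ‖∑ j, (f j ω - c j)‖ := by
          rw [Finset.sum_apply, Finset.sum_sub_distrib]
      _ ≤ ∑ j, ‖f j ω - c j‖ := norm_sum_le _ _
      _ ≤ ∑ _j : ι, δ := Finset.sum_le_sum fun j _ => (hω j).le
      _ = Fintype.card ι * δ := by simp
      _ < ε := by
          rw [mul_div_assoc', div_lt_iff₀ (by positivity)]
          linarith
  have hpos : 0 < μ (⋂ j, f j ⁻¹' Metric.ball (c j) δ) := by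
    rw [hf.meas_iInter fun j => ⟨_, Metric.isOpen_ball.measurableSet, rfl⟩]
    refine CanonicallyOrderedAdd.prod_pos.2 fun j _ => ?_
    rw [← Measure.map_apply (hmeas j) Metric.isOpen_ball.measurableSet]
    exact hc j δ hδ
  rw [Measure.map_apply (by fun_prop) Metric.isOpen_ball.measurableSet]
  exact hpos.trans_le (measure_mono hsub)

variable [IsFiniteMeasure μ] {G : Type*} [MeasurableSpace G] [MeasurableSingletonClass G]

lemma IndepFun.nullSingletonClass_map_add [AddGroup G] [MeasurableAdd₂ G] {X Y : Ω → G}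
    (hXY : IndepFun X Y μ) (hX : Measurable X) (hY : Measurable Y)
    [NullSingletonClass (μ.map Y)] : NullSingletonClass (μ.map (X + Y)) := by
  refine ⟨fun c => ?_⟩
  have hc : MeasurableSet ((fun p : G × G => p.1 + p.2) ⁻¹' {c}) :=
    measurable_add (measurableSet_singleton c)
  rw [hXY.map_add_eq_map_conv_map hX hY, Measure.conv, Measure.map_apply measurable_add
    (measurableSet_singleton c), Measure.prod_apply hc]
  have hfiber : ∀ x : G, Prod.mk x ⁻¹' ((fun p : G × G => p.1 + p.2) ⁻¹' {c}) = {-x + c} :=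
    fun x => by ext; simp [eq_neg_add_iff_add_eq]
  simp [hfiber]

lemma iIndepFun.nullSingletonClass_map_sum [AddCommGroup G] [MeasurableAdd₂ G] {ι : Type*}
    [Fintype ι] {f : ι → Ω → G} (hf : iIndepFun f μ) (hmeas : ∀ j, Measurable (f j))
    (j₀ : ι) [NullSingletonClass (μ.map (f j₀))] : NullSingletonClass (μ.map (∑ j, f j)) := by
  classical
  rw [← Finset.sum_erase_add _ _ (Finset.mem_univ j₀)]
  exact (hf.indepFun_finsetSum_of_notMem hmeas (Finset.notMem_erase j₀ Finset.univ))
    |>.nullSingletonClass_map_add (by fun_prop) (hmeas j₀)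

end Independent

section WeightedLog

variable {V : Ω → ℝ}

lemma Ioi_subset_support_map (hV : Measurable V)
    (hcharge : ∀ a b : ℝ, 0 < a → a < b → 0 < μ {ω | a ≤ V ω ∧ V ω ≤ b}) :
    Set.Ioi 0 ⊆ (μ.map V).support := by
  intro x hx
  refine (Measure.mem_support_iff_forall x).2 fun U hU => ?_
  obtain ⟨ε, hε, hsub⟩ :=
    (nhds_basis_Icc_pos x).mem_iff.1 (Filter.inter_mem hU (Ioi_mem_nhds hx))
  have ha : 0 < x - ε := (hsub ⟨le_rfl, by linarith⟩).2
  calc 0 < μ {ω | x - ε ≤ V ω ∧ V ω ≤ x + ε} := hcharge _ _ ha (by linarith)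
    _ ≤ μ (V ⁻¹' U) := measure_mono fun ω hω => (hsub hω).1
    _ ≤ (μ.map V) U := Measure.le_map_apply hV.aemeasurable U

lemma nullSingletonClass_map_mul_log (hV : Measurable V) (hposV : ∀ᵐ ω ∂μ, 0 < V ω)
    (hatom : ∀ c : ℝ, μ {ω | V ω = c} = 0) {w : ℝ} (hw : w ≠ 0) :
    NullSingletonClass (μ.map fun ω => w * Real.log (V ω)) := by
  have : NullSingletonClass (μ.map V) :=
    ⟨fun c => by rw [Measure.map_apply hV (measurableSet_singleton c)]; exact hatom c⟩
  have hg : Measurable fun x : ℝ => w * Real.log x := by fun_prop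
  change NullSingletonClass (μ.map ((fun x => w * Real.log x) ∘ V))
  rw [← Measure.map_map hg hV]
  exact nullSingletonClass_map_of_injOn hg
    ((mul_right_injective₀ hw).comp_injOn Real.log_injOn_pos)
    ((ae_map_iff hV.aemeasurable measurableSet_Ioi).2 hposV)

lemma mul_mem_support_map_mul_log (hV : Measurable V)
    (hcharge : ∀ a b : ℝ, 0 < a → a < b → 0 < μ {ω | a ≤ V ω ∧ V ω ≤ b}) (w L : ℝ) :
    w * L ∈ (μ.map fun ω => w * Real.log (V ω)).support := by
  have hg : Measurable fun x : ℝ => w * Real.log x := by fun_prop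
  change _ ∈ (μ.map ((fun x => w * Real.log x) ∘ V)).support
  rw [← Measure.map_map hg hV]
  simpa using Measure.mem_support_map hg.aemeasurable
    (continuousAt_const.mul (Real.continuousAt_log (Real.exp_pos L).ne'))
    (Ioi_subset_support_map hV hcharge (Real.exp_pos L))

end WeightedLog

end ProbabilityTheory

/-- let `Z = ∑ⱼ wⱼ log Vⱼ` where the `Vⱼ` are independent,
almost surely positive, atomless random variables with `P(a ≤ Vⱼ ≤ b) > 0` for
all `0 < a < b`, and assume some weight `w_{j₀} ≠ 0`. Then the cumulative
distribution function of `Z` is continuous and strictly increasing on `ℝ`. -/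
theorem cdf_weighted_log_sum_continuous_strictMono
    {Ω : Type*} [MeasurableSpace Ω] (μ : Measure Ω) [IsProbabilityMeasure μ]
    (m : ℕ) (V : Fin m → Ω → ℝ) (w : Fin m → ℝ)
    (hmeas : ∀ j, Measurable (V j))
    (hindep : iIndepFun V μ)
    (hposV : ∀ j, ∀ᵐ ω ∂μ, 0 < V j ω)
    (hatomless : ∀ j, ∀ c : ℝ, μ {ω | V j ω = c} = 0)
    (hcharge : ∀ j, ∀ a b : ℝ, 0 < a → a < b →
      0 < μ {ω | a ≤ V j ω ∧ V j ω ≤ b})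
    (hw : ∃ j₀, w j₀ ≠ 0) :
    Continuous (fun t : ℝ =>
        (μ {ω | (∑ j, w j * Real.log (V j ω)) ≤ t}).toReal) ∧
    StrictMono (fun t : ℝ =>
        (μ {ω | (∑ j, w j * Real.log (V j ω)) ≤ t}).toReal) := by
  obtain ⟨j₀, hj₀⟩ := hw
  set f : Fin m → Ω → ℝ := fun j ω => w j * Real.log (V j ω)
  have hfmeas : ∀ j, Measurable (f j) := fun j => by fun_prop
  have hfind : iIndepFun f μ := hindep.comp (fun j x => w j * Real.log x) fun j => by fun_prop
  have hsum : Measurable (∑ j, f j) := by fun_prop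
  have := Measure.isProbabilityMeasure_map (μ := μ) hsum.aemeasurable
  have hcdf : (fun t : ℝ => (μ {ω | (∑ j, w j * Real.log (V j ω)) ≤ t}).toReal) =
      cdf (μ.map (∑ j, f j)) := by
    ext t
    rw [cdf_map_apply hsum t]
    simp [f, Finset.sum_apply, measureReal_def]
  have : NullSingletonClass (μ.map (f j₀)) :=
    nullSingletonClass_map_mul_log (hmeas j₀) (hposV j₀) (hatomless j₀) hj₀
  have : NullSingletonClass (μ.map (∑ j, f j)) := hfind.nullSingletonClass_map_sum hfmeas j₀
  have hsupport : (μ.map (∑ j, f j)).support = Set.univ := by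
    refine Set.eq_univ_of_forall fun s => ?_
    have hs : ∑ j, w j * (Pi.single j₀ (s / w j₀) : Fin m → ℝ) j = s := by
      simp [Pi.single_apply, mul_div_cancel₀ _ hj₀]
    rw [← hs]
    exact hfind.sum_mem_support_map_sum hfmeas fun j =>
      mul_mem_support_map_mul_log (hmeas j) (hcharge j) _ _
  rw [hcdf]
  exact ⟨continuous_cdf _, strictMono_cdf _ hsupport⟩
end
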